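/- Let G be a cycle graph with simple demand digraph H = (T,L), nonatomic users partitioned into sets I_ℓ (ℓ ∈ L) with strictly increasing continuous user-specific cost functions on arcs. If each arc of the directed version of G is contained in at most two routes, then any two Nash equilibria induce the same flow on every arc. -/

import Mathlib

open scoped Classical
open MeasureTheory

/-- The positive (counterclockwise) route of the OD-pair `(o, d)` on the cycle with
vertex set `ZMod n` contains the positive arc at edge `v` (the arc from `v` to `v + 1`)
iff `posRoute n o d v` holds. -/
def posRoute (n : ℕ) (o d v : ZMod n) : Prop := (v - o).val < (d - o).val

/-- The negative (clockwise) route of `(o, d)` contains the negative arc at edge `v`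
(the arc from `v + 1` to `v`) iff `negRoute n o d v` holds. -/
def negRoute (n : ℕ) (o d v : ZMod n) : Prop := (v - d).val < (o - d).val

/-- An arc of the directed version of the cycle is a pair `(v, b)`: for `b = true` the
positive arc `v → v + 1`, for `b = false` the negative arc `v + 1 → v`.
`inRoute n o d b a` says that arc `a` lies on the route of direction `b` of the
OD-pair `(o, d)`. -/
def inRoute (n : ℕ) (o d : ZMod n) (b : Bool) (a : ZMod n × Bool) : Prop :=
  a.2 = b ∧ (if b then posRoute n o d a.1 else negRoute n o d a.1)

/-- Flow induced on arc `a` by the strategy profile `σ` (`σ i = true` means that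
user `i` chooses their positive route, `σ i = false` their negative route). -/
noncomputable def flow {I : Type} [MeasurableSpace I] (μ : Measure I) (n : ℕ)
    (od : I → ZMod n × ZMod n) (σ : I → Bool) (a : ZMod n × Bool) : ℝ :=
  (μ {i | inRoute n (od i).1 (od i).2 (σ i) a}).toReal

/-- The cost, for user `i`, of their route in direction `b`, given arc flows `f`:
the sum over the arcs of that route of the user-specific arc costs. -/
noncomputable def routeCost {I : Type} (n : ℕ) [NeZero n]
    (c : I → ZMod n × Bool → ℝ → ℝ) (f : ZMod n × Bool → ℝ)
    (od : I → ZMod n × ZMod n) (i : I) (b : Bool) : ℝ :=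
  ∑ a ∈ Finset.univ.filter (fun a : ZMod n × Bool => inRoute n (od i).1 (od i).2 b a),
    c i a (f a)

/-- `σ` is a Nash equilibrium: every user's chosen route is a minimal-cost route
given the induced flows. -/
def IsEquilibrium {I : Type} [MeasurableSpace I] (μ : Measure I) (n : ℕ) [NeZero n]
    (od : I → ZMod n × ZMod n) (c : I → ZMod n × Bool → ℝ → ℝ) (σ : I → Bool) : Prop :=
  ∀ (i : I) (b : Bool),
    routeCost n c (flow μ n od σ) od i (σ i) ≤ routeCost n c (flow μ n od σ) od i b

/-!
Write `t ℓ b` for the change, from `σ'` to `σ`, of the demand of `ℓ` routed in direction `b`.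
Then `t ℓ (!b) = -t ℓ b`, and the change of the flow on an arc is the sum of `t ℓ b` over the at
most two routes through it. If `t ℓ b > 0`, some user of `ℓ` moved from route `b` to route `!b`;
comparing this user's costs in both equilibria shows that flows cannot have risen on route `b` and
fallen on route `!b` unless they are unchanged on both routes. For the pair `(ℓ, b)` maximizing
`t`, every arc of route `b` carries `t ℓ b` plus at most one term of smaller modulus, so flows did
rise there and fall on route `!b`: they are unchanged on both routes of `ℓ`. On the cycle, the
flow changes on the two arcs of an edge differ by the same total `∑ ℓ, t ℓ b` at every edge, and
one of them vanishes. A positive total would make some `t m b > 0` on an arc whose flow rose,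
which the switching argument for `m` forbids; so the total is zero and all flow changes vanish.
-/

theorem Finset.sum_nonneg_of_abs_le_of_card_le_two {ι G : Type*} [AddCommGroup G] [LinearOrder G]
    [IsOrderedAddMonoid G] [DecidableEq ι] {F : Finset ι} {u : ι → G} {ℓ : ι} (hF : F.card ≤ 2)
    (hℓ : ℓ ∈ F) (hmax : ∀ m ∈ F, |u m| ≤ u ℓ) : 0 ≤ ∑ m ∈ F, u m := by
  have hℓ0 : 0 ≤ u ℓ := (abs_nonneg _).trans (hmax ℓ hℓ)
  have : Nonempty ι := ⟨ℓ⟩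
  have hcard : (F.erase ℓ).card ≤ 1 := by rw [Finset.card_erase_of_mem hℓ]; omega
  obtain ⟨m, hm⟩ := Finset.card_le_one_iff_subset_singleton.1 hcard
  rw [← F.add_sum_erase u hℓ]
  rcases Finset.subset_singleton_iff.1 hm with he | he
  · simpa [he] using hℓ0
  · rw [he, Finset.sum_singleton]
    have hmF : m ∈ F := Finset.mem_of_mem_erase (he ▸ Finset.mem_singleton_self m)
    exact neg_le_iff_add_nonneg'.1 (neg_le_of_abs_le (hmax m hmF))

theorem eqOn_of_route_switch {α : Type*} [DecidableEq α] {A B : Finset α} {c : α → ℝ → ℝ}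
    (hc : ∀ a, StrictMono (c a)) {f f' : α → ℝ}
    (hf : ∑ a ∈ A, c a (f a) ≤ ∑ a ∈ B, c a (f a))
    (hf' : ∑ a ∈ B, c a (f' a) ≤ ∑ a ∈ A, c a (f' a))
    (hA : ∀ a ∈ A, f' a ≤ f a) (hB : ∀ a ∈ B, f a ≤ f' a) : Set.EqOn f f' ↑(A ∪ B) := by
  set δ : α → ℝ := fun a => c a (f a) - c a (f' a)
  have hδA : ∀ a ∈ A, 0 ≤ δ a := fun a ha => sub_nonneg.2 ((hc a).monotone (hA a ha))
  have hδB : ∀ a ∈ B, δ a ≤ 0 := fun a ha => sub_nonpos.2 ((hc a).monotone (hB a ha))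
  have hδ : ∑ a ∈ A, δ a ≤ ∑ a ∈ B, δ a := by
    simp only [δ, Finset.sum_sub_distrib]; linarith
  have hA0 : ∑ a ∈ A, δ a = 0 :=
    le_antisymm (hδ.trans (Finset.sum_nonpos hδB)) (Finset.sum_nonneg hδA)
  have hB0 : ∑ a ∈ B, δ a = 0 :=
    le_antisymm (Finset.sum_nonpos hδB) (hA0 ▸ hδ)
  intro a ha
  refine (hc a).injective (sub_eq_zero.1 ?_)
  rcases Finset.mem_union.1 ha with ha | ha
  · exact (Finset.sum_eq_zero_iff_of_nonneg hδA).1 hA0 a ha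
  · exact (Finset.sum_eq_zero_iff_of_nonpos hδB).1 hB0 a ha

section Cycle

variable {n : ℕ} {o d o' d' v : ZMod n}

theorem posRoute_self (h : o ≠ d) : posRoute n o d o := by
  simpa [posRoute, ZMod.val_pos, sub_eq_zero] using h.symm

theorem not_posRoute_target : ¬ posRoute n o d d := lt_irrefl _

variable [NeZero n]

theorem negRoute_iff_not_posRoute (h : o ≠ d) : negRoute n o d v ↔ ¬ posRoute n o d v := by
  have hd : d - o ≠ 0 := sub_ne_zero.2 h.symm
  have hsub : v - d = (v - o) - (d - o) := by ring
  have hneg : o - d = -(d - o) := by ring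
  have hv := ZMod.val_lt (v - o)
  have hdo := ZMod.val_lt (d - o)
  have hdo0 : (d - o).val ≠ 0 := by rwa [Ne, ZMod.val_eq_zero]
  unfold negRoute posRoute
  rw [hsub, hneg, ZMod.neg_val, if_neg hd]
  by_cases hle : (d - o).val ≤ (v - o).val
  · rw [ZMod.val_sub hle]; omega
  · have hsw : (v - o) - (d - o) = -((d - o) - (v - o)) := by ring
    have hne : (d - o) - (v - o) ≠ 0 := by
      intro h0; rw [sub_eq_zero] at h0; exact hle (h0 ▸ le_rfl)
    rw [hsw, ZMod.neg_val, if_neg hne, ZMod.val_sub (by omega)]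
    omega

theorem not_posRoute_pred_self : ¬ posRoute n o d (o - 1) := by
  unfold posRoute
  rw [show o - 1 - o = -1 by ring, ZMod.neg_val]
  split_ifs with h1
  · rw [show d - o = 0 by rw [← mul_one (d - o), h1, mul_zero], ZMod.val_zero]
    exact lt_irrefl 0
  · have := ZMod.val_lt (d - o)
    rw [ZMod.val_one_eq_one_mod]
    have : 1 % n ≤ 1 := Nat.mod_le 1 n
    omega

theorem posRoute_pred (h : posRoute n o d v) (hv : v ≠ o) : posRoute n o d (v - 1) := by
  have hvo : v - o ≠ 0 := sub_ne_zero.2 hv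
  have h1 : (1 : ZMod n).val ≤ (v - o).val := by
    rw [ZMod.val_one_eq_one_mod]
    exact (Nat.mod_le 1 n).trans (Nat.one_le_iff_ne_zero.2 ((ZMod.val_ne_zero _).2 hvo))
  unfold posRoute at h ⊢
  rw [show v - 1 - o = (v - o) - 1 by ring, ZMod.val_sub h1]
  omega

theorem posRoute_injective (h : o ≠ d)
    (hP : ∀ v, posRoute n o d v ↔ posRoute n o' d' v) : o = o' ∧ d = d' := by
  have ho : o = o' := by
    by_contra hne
    exact not_posRoute_pred_self ((hP _).2 (posRoute_pred ((hP o).1 (posRoute_self h)) hne))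
  subst ho
  have h1 := mt (hP d).2 not_posRoute_target
  have h2 := mt (hP d').1 not_posRoute_target
  unfold posRoute at h1 h2
  have hval : (d - o).val = (d' - o).val := by omega
  exact ⟨rfl, sub_left_injective (ZMod.val_injective n hval)⟩

noncomputable def route (ℓ : ZMod n × ZMod n) (b : Bool) : Finset (ZMod n × Bool) :=
  Finset.univ.filter (fun a => inRoute n ℓ.1 ℓ.2 b a)

theorem mem_route {ℓ : ZMod n × ZMod n} {b : Bool} {a : ZMod n × Bool} :
    a ∈ route ℓ b ↔ inRoute n ℓ.1 ℓ.2 b a := by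
  simp [route]

theorem inRoute_not_iff (h : o ≠ d) (b : Bool) :
    inRoute n o d (!b) (v, !b) ↔ ¬ inRoute n o d b (v, b) := by
  cases b <;> simp [inRoute, negRoute_iff_not_posRoute h]

theorem exists_inRoute (h : o ≠ d) (b : Bool) : ∃ v, inRoute n o d b (v, b) := by
  cases b
  · exact ⟨d, by simp [inRoute, negRoute_iff_not_posRoute h, not_posRoute_target]⟩
  · exact ⟨o, by simp [inRoute, posRoute_self h]⟩

theorem inRoute_injective {b b' : Bool} (h : o ≠ d) (h' : o' ≠ d')
    (hR : ∀ a, inRoute n o d b a ↔ inRoute n o' d' b' a) : o = o' ∧ d = d' ∧ b = b' := by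
  obtain ⟨v, hv⟩ := exists_inRoute h b
  obtain rfl : b = b' := ((hR _).1 hv).1
  suffices hP : ∀ v, posRoute n o d v ↔ posRoute n o' d' v from
    (posRoute_injective h hP).imp_right (⟨·, rfl⟩)
  intro v
  cases b
  · simpa [inRoute, negRoute_iff_not_posRoute h, negRoute_iff_not_posRoute h', not_iff_not]
      using hR (v, false)
  · simpa [inRoute] using hR (v, true)

end Cycle

section ArcFlow
variable {n : ℕ} [NeZero n] {L : Finset (ZMod n × ZMod n)} {t : ZMod n × ZMod n → Bool → ℝ}

noncomputable def arcFlow (L : Finset (ZMod n × ZMod n)) (x : ZMod n × ZMod n → Bool → ℝ)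
    (a : ZMod n × Bool) : ℝ :=
  ∑ ℓ ∈ L with inRoute n ℓ.1 ℓ.2 a.2 a, x ℓ a.2

/-- What the equilibrium conditions of two profiles say about the change `t` of their route flows. -/
def IsShiftStable (L : Finset (ZMod n × ZMod n)) (t : ZMod n × ZMod n → Bool → ℝ) : Prop :=
  ∀ ℓ ∈ L, ∀ b, 0 < t ℓ b → (∀ a ∈ route ℓ b, 0 ≤ arcFlow L t a) →
    (∀ a ∈ route ℓ (!b), arcFlow L t a ≤ 0) → ∀ b', ∀ a ∈ route ℓ b', arcFlow L t a = 0

theorem arcFlow_sub_arcFlow_not (hL : ∀ ℓ ∈ L, ℓ.1 ≠ ℓ.2) (ht : ∀ ℓ ∈ L, ∀ b, t ℓ (!b) = -t ℓ b)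
    (v : ZMod n) (b : Bool) : arcFlow L t (v, b) - arcFlow L t (v, !b) = ∑ ℓ ∈ L, t ℓ b := by
  have hnot : arcFlow L t (v, !b) = -∑ ℓ ∈ L with ¬ inRoute n ℓ.1 ℓ.2 b (v, b), t ℓ b := by
    rw [arcFlow, ← Finset.sum_neg_distrib]
    exact Finset.sum_congr (Finset.filter_congr fun ℓ hℓ => inRoute_not_iff (hL ℓ hℓ) b)
      fun ℓ hℓ => ht ℓ (Finset.mem_filter.1 hℓ).1 b
  rw [hnot, sub_neg_eq_add, arcFlow, Finset.sum_filter_add_sum_filter_not]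

theorem arcFlow_eq_zero_on_routes_of_forall_le (hroutes : ∀ a : ZMod n × Bool,
      (L.filter (fun ℓ => inRoute n ℓ.1 ℓ.2 a.2 a)).card ≤ 2)
    (ht : ∀ ℓ ∈ L, ∀ b, t ℓ (!b) = -t ℓ b) (hE : IsShiftStable L t) {ℓ : ZMod n × ZMod n}
    {b : Bool} (hℓ : ℓ ∈ L) (hpos : 0 < t ℓ b) (hmax : ∀ m ∈ L, ∀ b', t m b' ≤ t ℓ b) :
    ∀ b', ∀ a ∈ route ℓ b', arcFlow L t a = 0 := by
  have habs : ∀ m ∈ L, ∀ b', |t m b'| ≤ t ℓ b := fun m hm b' =>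
    abs_le.2 ⟨by linarith [ht m hm b', hmax m hm (!b')], hmax m hm b'⟩
  refine hE ℓ hℓ b hpos (fun a ha => ?_) (fun a ha => ?_)
  · obtain ⟨rfl, -⟩ := mem_route.1 ha
    exact Finset.sum_nonneg_of_abs_le_of_card_le_two (hroutes a)
      (Finset.mem_filter.2 ⟨hℓ, mem_route.1 ha⟩) fun m hm => habs m (Finset.mem_filter.1 hm).1 _
  · obtain ⟨v, _⟩ := a
    obtain ⟨rfl, -⟩ := mem_route.1 ha
    have := Finset.sum_nonneg_of_abs_le_of_card_le_two (u := fun m => -t m (!b)) (hroutes _)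
      (Finset.mem_filter.2 ⟨hℓ, mem_route.1 ha⟩) fun m hm => by
        rw [abs_neg, ht ℓ hℓ, neg_neg]; exact habs m (Finset.mem_filter.1 hm).1 _
    rw [Finset.sum_neg_distrib] at this
    exact neg_nonneg.1 this

theorem arcFlow_eq_zero_of_eq_zero_on_routes (hL : ∀ ℓ ∈ L, ℓ.1 ≠ ℓ.2)
    (ht : ∀ ℓ ∈ L, ∀ b, t ℓ (!b) = -t ℓ b) (hE : IsShiftStable L t) {ℓ : ZMod n × ZMod n}
    (hℓ : ℓ ∈ L) (hflat : ∀ b, ∀ a ∈ route ℓ b, arcFlow L t a = 0) :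
    ∀ a, arcFlow L t a = 0 := by
  obtain ⟨b, hD⟩ : ∃ b, 0 ≤ ∑ m ∈ L, t m b := by
    rcases le_total 0 (∑ m ∈ L, t m true) with h | h
    · exact ⟨true, h⟩
    · refine ⟨false, ?_⟩
      show 0 ≤ ∑ m ∈ L, t m (!true)
      rw [Finset.sum_congr rfl fun m hm => ht m hm true, Finset.sum_neg_distrib]
      exact neg_nonneg.2 h
  have hdiff := arcFlow_sub_arcFlow_not hL ht
  have hzero : ∀ v, arcFlow L t (v, b) = 0 ∨ arcFlow L t (v, !b) = 0 := fun v =>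
    (em (inRoute n ℓ.1 ℓ.2 b (v, b))).imp (fun h => hflat b _ (mem_route.2 h))
      fun h => hflat (!b) _ (mem_route.2 ((inRoute_not_iff (hL ℓ hℓ) b).2 h))
  have hsign : ∀ v, 0 ≤ arcFlow L t (v, b) ∧ arcFlow L t (v, !b) ≤ 0 := by
    intro v
    have := hdiff v b
    rcases hzero v with h | h <;> constructor <;> linarith
  have hD0 : ∑ m ∈ L, t m b = 0 := by
    by_contra hne
    obtain ⟨w, hw⟩ := exists_inRoute (hL ℓ hℓ) (!b)
    have hwpos : 0 < arcFlow L t (w, b) := by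
      linarith [hdiff w b, hflat (!b) _ (mem_route.2 hw), lt_of_le_of_ne hD (Ne.symm hne)]
    obtain ⟨m, hm, htm⟩ : ∃ m ∈ L.filter (fun m => inRoute n m.1 m.2 b (w, b)), 0 < t m b := by
      by_contra! h
      exact hwpos.not_ge (Finset.sum_nonpos h)
    obtain ⟨hmL, hmw⟩ := Finset.mem_filter.1 hm
    have hw0 := hE m hmL b htm
      (fun a ha => by obtain ⟨v, _⟩ := a; obtain ⟨rfl, -⟩ := mem_route.1 ha; exact (hsign v).1)
      (fun a ha => by obtain ⟨v, _⟩ := a; obtain ⟨rfl, -⟩ := mem_route.1 ha; exact (hsign v).2)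
      b (w, b) (mem_route.2 hmw)
    linarith
  rintro ⟨v, b'⟩
  have := hdiff v b
  rcases Bool.eq_or_eq_not b' b with rfl | rfl <;> rcases hzero v with h | h <;> linarith

theorem arcFlow_eq_zero_of_isShiftStable (hL : ∀ ℓ ∈ L, ℓ.1 ≠ ℓ.2)
    (hroutes : ∀ a : ZMod n × Bool, (L.filter (fun ℓ => inRoute n ℓ.1 ℓ.2 a.2 a)).card ≤ 2)
    (ht : ∀ ℓ ∈ L, ∀ b, t ℓ (!b) = -t ℓ b) (hE : IsShiftStable L t) :
    ∀ a, arcFlow L t a = 0 := by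
  rcases L.eq_empty_or_nonempty with rfl | hne
  · simp [arcFlow]
  obtain ⟨⟨ℓ, b⟩, hmem, hmax⟩ :=
    (L ×ˢ Finset.univ).exists_max_image (fun p : _ × Bool => t p.1 p.2)
      (hne.product Finset.univ_nonempty)
  have hℓ : ℓ ∈ L := (Finset.mem_product.1 hmem).1
  have hmax' : ∀ m ∈ L, ∀ b', t m b' ≤ t ℓ b := fun m hm b' =>
    hmax (m, b') (Finset.mem_product.2 ⟨hm, Finset.mem_univ _⟩)
  rcases lt_or_ge 0 (t ℓ b) with hpos | hnpos
  · exact arcFlow_eq_zero_of_eq_zero_on_routes hL ht hE hℓ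
      (arcFlow_eq_zero_on_routes_of_forall_le hroutes ht hE hℓ hpos hmax')
  · intro a
    refine Finset.sum_eq_zero fun m hm => ?_
    have hmL := (Finset.mem_filter.1 hm).1
    linarith [hmax' m hmL a.2, hmax' m hmL (!a.2), ht m hmL a.2]

end ArcFlow

section Game
variable {n : ℕ} {L : Finset (ZMod n × ZMod n)} {I : Type} [MeasurableSpace I]
  (μ : Measure I) {od : I → ZMod n × ZMod n} {σ σ' : I → Bool}

noncomputable def routeFlow (μ : Measure I) (od : I → ZMod n × ZMod n) (σ : I → Bool)
    (ℓ : ZMod n × ZMod n) (b : Bool) : ℝ :=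
  (μ {i | od i = ℓ ∧ σ i = b}).toReal

theorem exists_switch_of_routeFlow_lt [IsFiniteMeasure μ] {ℓ : ZMod n × ZMod n} {b : Bool}
    (h : routeFlow μ od σ' ℓ b < routeFlow μ od σ ℓ b) : ∃ i, od i = ℓ ∧ σ i = b ∧ σ' i = !b := by
  by_contra! hno
  have hsub : {i | od i = ℓ ∧ σ i = b} ⊆ {i | od i = ℓ ∧ σ' i = b} := fun i ⟨h1, h2⟩ =>
    ⟨h1, by simpa using hno i h1 h2⟩
  exact h.not_ge (ENNReal.toReal_mono (measure_ne_top _ _) (measure_mono hsub))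

variable [NeZero n]

/-- A user's route determines their OD-pair and direction, so this set is cut out by the
measurable route-membership sets. -/
theorem measurableSet_od_eq_and_eq (hL : ∀ ℓ ∈ L, ℓ.1 ≠ ℓ.2) (hod : ∀ i, od i ∈ L)
    (hm : ∀ a, MeasurableSet {i | inRoute n (od i).1 (od i).2 (σ i) a})
    {ℓ : ZMod n × ZMod n} (hℓ : ℓ ∈ L) (b : Bool) : MeasurableSet {i | od i = ℓ ∧ σ i = b} := by
  have hset : {i | od i = ℓ ∧ σ i = b} =
      {i | ∀ a, inRoute n (od i).1 (od i).2 (σ i) a ↔ inRoute n ℓ.1 ℓ.2 b a} := by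
    ext i
    refine ⟨fun ⟨h1, h2⟩ a => by rw [h1, h2], fun h => ?_⟩
    obtain ⟨h1, h2, h3⟩ := inRoute_injective (hL _ (hod i)) (hL ℓ hℓ) h
    exact ⟨Prod.ext h1 h2, h3⟩
  rw [hset]
  exact measurableSet_setOfPred.2
    (Measurable.forall fun a => (measurableSet_setOfPred.1 (hm a)).iff measurable_const)

theorem flow_eq_arcFlow [IsFiniteMeasure μ] (hL : ∀ ℓ ∈ L, ℓ.1 ≠ ℓ.2) (hod : ∀ i, od i ∈ L)
    (hm : ∀ a, MeasurableSet {i | inRoute n (od i).1 (od i).2 (σ i) a}) (a : ZMod n × Bool) :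
    flow μ n od σ a = arcFlow L (routeFlow μ od σ) a := by
  have hset : {i | inRoute n (od i).1 (od i).2 (σ i) a} =
      ⋃ ℓ ∈ L.filter (fun ℓ => inRoute n ℓ.1 ℓ.2 a.2 a), {i | od i = ℓ ∧ σ i = a.2} := by
    ext i
    simp only [Set.mem_ofPred_eq, Set.mem_iUnion, Finset.mem_filter, exists_prop]
    constructor
    · intro h
      exact ⟨od i, ⟨hod i, by rwa [h.1]⟩, rfl, h.1.symm⟩
    · rintro ⟨ℓ, ⟨-, hℓa⟩, rfl, hσ⟩
      rwa [hσ]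
  rw [flow, arcFlow, hset, measure_biUnion_finset, ENNReal.toReal_sum fun _ _ => measure_ne_top _ _]
  · rfl
  · exact fun ℓ _ ℓ' _ hne => Set.disjoint_left.2 fun i h h' => hne (h.1.symm.trans h'.1)
  · exact fun ℓ hℓ => measurableSet_od_eq_and_eq hL hod hm (Finset.mem_filter.1 hℓ).1 _

theorem routeFlow_add_routeFlow_not [IsFiniteMeasure μ] (hL : ∀ ℓ ∈ L, ℓ.1 ≠ ℓ.2)
    (hod : ∀ i, od i ∈ L) (hm : ∀ a, MeasurableSet {i | inRoute n (od i).1 (od i).2 (σ i) a})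
    {ℓ : ZMod n × ZMod n} (hℓ : ℓ ∈ L) (b : Bool) :
    routeFlow μ od σ ℓ b + routeFlow μ od σ ℓ (!b) = (μ {i | od i = ℓ}).toReal := by
  have hset : {i | od i = ℓ ∧ σ i = b} ∪ {i | od i = ℓ ∧ σ i = !b} = {i | od i = ℓ} := by
    ext i
    cases h : σ i <;> cases b <;> simp [h]
  rw [routeFlow, routeFlow, ← ENNReal.toReal_add (measure_ne_top _ _) (measure_ne_top _ _),
    ← measure_union _ (measurableSet_od_eq_and_eq hL hod hm hℓ _), hset]
  exact Set.disjoint_left.2 fun i h h' => by simp_all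

theorem flow_sub_flow_eq_arcFlow [IsFiniteMeasure μ] (hL : ∀ ℓ ∈ L, ℓ.1 ≠ ℓ.2)
    (hod : ∀ i, od i ∈ L) (hm : ∀ a, MeasurableSet {i | inRoute n (od i).1 (od i).2 (σ i) a})
    (hm' : ∀ a, MeasurableSet {i | inRoute n (od i).1 (od i).2 (σ' i) a}) (a : ZMod n × Bool) :
    flow μ n od σ a - flow μ n od σ' a = arcFlow L (routeFlow μ od σ - routeFlow μ od σ') a := by
  rw [flow_eq_arcFlow μ hL hod hm, flow_eq_arcFlow μ hL hod hm', arcFlow, arcFlow, arcFlow,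
    ← Finset.sum_sub_distrib]
  rfl

theorem routeFlow_sub_routeFlow_not [IsFiniteMeasure μ] (hL : ∀ ℓ ∈ L, ℓ.1 ≠ ℓ.2)
    (hod : ∀ i, od i ∈ L) (hm : ∀ a, MeasurableSet {i | inRoute n (od i).1 (od i).2 (σ i) a})
    (hm' : ∀ a, MeasurableSet {i | inRoute n (od i).1 (od i).2 (σ' i) a}) :
    ∀ ℓ ∈ L, ∀ b, (routeFlow μ od σ - routeFlow μ od σ') ℓ (!b) =
      -(routeFlow μ od σ - routeFlow μ od σ') ℓ b := by
  intro ℓ hℓ b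
  simp only [Pi.sub_apply]
  linarith [routeFlow_add_routeFlow_not μ hL hod hm hℓ b,
    routeFlow_add_routeFlow_not μ hL hod hm' hℓ b]

theorem isShiftStable_routeFlow_sub [IsFiniteMeasure μ] (hL : ∀ ℓ ∈ L, ℓ.1 ≠ ℓ.2)
    (hod : ∀ i, od i ∈ L) (hm : ∀ a, MeasurableSet {i | inRoute n (od i).1 (od i).2 (σ i) a})
    (hm' : ∀ a, MeasurableSet {i | inRoute n (od i).1 (od i).2 (σ' i) a})
    {c : I → ZMod n × Bool → ℝ → ℝ} (hmono : ∀ i a, StrictMono (c i a))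
    (heq : IsEquilibrium μ n od c σ) (heq' : IsEquilibrium μ n od c σ') :
    IsShiftStable L (routeFlow μ od σ - routeFlow μ od σ') := by
  have hg a := (flow_sub_flow_eq_arcFlow μ hL hod hm hm' a).symm
  intro ℓ hℓ b hpos hA hB b' a ha
  obtain ⟨i, rfl, hσi, hσ'i⟩ := exists_switch_of_routeFlow_lt μ (sub_pos.1 hpos)
  have hcost := heq i (!b)
  have hcost' := heq' i b
  simp only [routeCost, hσi, hσ'i] at hcost hcost'
  have hunchanged := eqOn_of_route_switch (A := route (od i) b) (B := route (od i) (!b))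
    (hmono i) hcost hcost' (fun a ha => by linarith [hA a ha, hg a])
    (fun a ha => by linarith [hB a ha, hg a])
  rw [hg, sub_eq_zero]
  refine hunchanged (Finset.mem_coe.2 ?_)
  rcases Bool.eq_or_eq_not b' b with rfl | rfl
  · exact Finset.mem_union_left _ ha
  · exact Finset.mem_union_right _ ha

end Game

theorem uniqueness_of_flows_of_atMostTwoRoutes_general (n : ℕ) [NeZero n]
    (L : Finset (ZMod n × ZMod n)) (hL : ∀ ℓ ∈ L, ℓ.1 ≠ ℓ.2)
    (hroutes : ∀ a : ZMod n × Bool,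
      (L.filter (fun ℓ => inRoute n ℓ.1 ℓ.2 a.2 a)).card ≤ 2)
    {I : Type} [MeasurableSpace I] (μ : Measure I) [IsFiniteMeasure μ]
    (od : I → ZMod n × ZMod n) (hod : ∀ i, od i ∈ L)
    (c : I → ZMod n × Bool → ℝ → ℝ)
    (hmono : ∀ i a, StrictMono (c i a))
    (σ σ' : I → Bool)
    (hm : ∀ a, MeasurableSet {i | inRoute n (od i).1 (od i).2 (σ i) a})
    (hm' : ∀ a, MeasurableSet {i | inRoute n (od i).1 (od i).2 (σ' i) a})
    (heq : IsEquilibrium μ n od c σ) (heq' : IsEquilibrium μ n od c σ') :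
    ∀ a : ZMod n × Bool, flow μ n od σ a = flow μ n od σ' a := by
  intro a
  have hzero := arcFlow_eq_zero_of_isShiftStable hL hroutes
    (routeFlow_sub_routeFlow_not μ hL hod hm hm')
    (isShiftStable_routeFlow_sub μ hL hod hm hm' hmono heq heq') a
  rw [← flow_sub_flow_eq_arcFlow μ hL hod hm hm'] at hzero
  exact sub_eq_zero.1 hzero

/-- If each arc of the directed version of the cycle is contained in
at most two routes, then any two Nash equilibria of the associated nonatomic
congestion game induce the same flow on every arc. -/
theorem uniqueness_of_flows_of_atMostTwoRoutes (n : ℕ) [NeZero n] (hn : 3 ≤ n)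
    (L : Finset (ZMod n × ZMod n)) (hL : ∀ ℓ ∈ L, ℓ.1 ≠ ℓ.2)
    (hroutes : ∀ a : ZMod n × Bool,
      (L.filter (fun ℓ => inRoute n ℓ.1 ℓ.2 a.2 a)).card ≤ 2)
    {I : Type} [MeasurableSpace I] (μ : Measure I) [IsFiniteMeasure μ]
    (od : I → ZMod n × ZMod n) (hod : ∀ i, od i ∈ L)
    (c : I → ZMod n × Bool → ℝ → ℝ)
    (hmono : ∀ i a, StrictMono (c i a)) (hcont : ∀ i a, Continuous (c i a))
    (hnonneg : ∀ i a x, 0 ≤ c i a x)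
    (σ σ' : I → Bool)
    (hm : ∀ a, MeasurableSet {i | inRoute n (od i).1 (od i).2 (σ i) a})
    (hm' : ∀ a, MeasurableSet {i | inRoute n (od i).1 (od i).2 (σ' i) a})
    (heq : IsEquilibrium μ n od c σ) (heq' : IsEquilibrium μ n od c σ') :
    ∀ a : ZMod n × Bool, flow μ n od σ a = flow μ n od σ' a :=
  uniqueness_of_flows_of_atMostTwoRoutes_general n L hL hroutes μ od hod c hmono σ σ' hm hm' heq
    heq'
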